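/- Let A be a symmetric positive definite q×q real matrix and h : ℝ^p × ℝ^q → ℝ^q satisfy ⟨h(z,y), A y⟩ ≤ δ₀ − δ₁ ⟨y, A y⟩ for all z, y, where δ₀, δ₁ > 0. Then for every real k ≥ 1 there exist constants β₀(k), β₁(k) > 0 such that for the function 𝒱_k(y) = ⟨y, A y⟩^k and the operator 𝔏^z[f](y) = Tr(η(z,y) η(z,y)ᵀ D²f(y)) + h(z,y)·∇f(y), with η bounded, one has 𝔏^z[𝒱_k](y) ≤ β₀(k) − β₁(k) 𝒱_k(y) for all z ∈ ℝ^p and y ∈ ℝ^q. -/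

import Mathlib

/-
Write `Q y = ⟨y, A y⟩` and `V = Q ^ k`. Since `A` is symmetric, `∇V = 2k Q^(k-1) A y`, so the
drift part of `𝔏^z V` is `2k Q^(k-1) ⟨h, A y⟩ ≤ 2k Q^(k-1) (δ₀ - δ₁ Q)`. Away from the origin the
Hessian is `2k Q^(k-1) A + 4k(k-1) Q^(k-2) (A y)(A y)ᵀ`, and the Cauchy–Schwarz inequality for the
form `A` gives `⟨v, A y⟩² ≤ ⟨v, A v⟩ Q`, so with `η` bounded the diffusion part is `O(Q^(k-1))`.
Every term of order `Q^(k-1)` is absorbed into `k δ₁ Q^k` up to an additive constant.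
-/

open Real Matrix

theorem exists_mul_rpow_sub_one_le_add {k δ : ℝ} (hk : 1 ≤ k) (hδ : 0 < δ) (E : ℝ) :
    ∃ B, ∀ t, 0 ≤ t → E * t ^ (k - 1) ≤ B + δ * t ^ k := by
  refine ⟨|E| * (|E| / δ) ^ (k - 1), fun t ht => ?_⟩
  have hB : 0 ≤ |E| * (|E| / δ) ^ (k - 1) := by positivity
  have hE : E * t ^ (k - 1) ≤ |E| * t ^ (k - 1) :=
    mul_le_mul_of_nonneg_right (le_abs_self E) (by positivity)
  rcases le_total t (|E| / δ) with hsmall | hlarge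
  · have := rpow_le_rpow ht hsmall (by linarith : 0 ≤ k - 1)
    nlinarith [abs_nonneg E, rpow_nonneg ht k]
  · have hEt : |E| ≤ δ * t := by rwa [div_le_iff₀' hδ] at hlarge
    have hpow : t ^ k = t ^ (k - 1) * t := by
      rw [← rpow_add_one' ht (by linarith)]; ring_nf
    nlinarith [rpow_nonneg ht (k - 1)]

theorem rpow_sub_one_mul_le_of_le_sub_mul {k t x δ₀ δ₁ : ℝ} (hk : 1 ≤ k) (ht : 0 ≤ t)
    (hx : x ≤ δ₀ - δ₁ * t) : t ^ (k - 1) * x ≤ δ₀ * t ^ (k - 1) - δ₁ * t ^ k := by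
  have hpow : t ^ k = t ^ (k - 1) * t := by
    rw [← rpow_add_one' ht (by linarith)]; ring_nf
  rw [hpow]
  nlinarith [rpow_nonneg ht (k - 1)]

theorem sum_sum_mul_le_of_abs_le {n : Type*} [Fintype n] {M H c : n → n → ℝ} {s : ℝ}
    (hM : ∀ i j, |M i j| ≤ s) (hH : ∀ i j, |H i j| ≤ c i j) :
    ∑ i, ∑ j, M i j * H i j ≤ ∑ i, ∑ j, s * c i j := by
  refine Finset.sum_le_sum fun i _ => Finset.sum_le_sum fun j _ => ?_
  calc M i j * H i j ≤ |M i j| * |H i j| := by rw [← abs_mul]; exact le_abs_self _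
    _ ≤ s * c i j := mul_le_mul (hM i j) (hH i j) (abs_nonneg _) ((abs_nonneg _).trans (hM i j))

namespace Matrix

variable {n : Type*} [Fintype n]

theorem abs_mul_transpose_apply_le {M : Matrix n n ℝ} {C : ℝ} (hM : ∀ i j, |M i j| ≤ C)
    (i j : n) : |(M * Mᵀ) i j| ≤ Fintype.card n * C ^ 2 := by
  calc |(M * Mᵀ) i j| ≤ ∑ l, |M i l| * |M j l| := by
        simpa only [mul_apply, transpose_apply, abs_mul] using
          Finset.abs_sum_le_sum_abs (fun l => M i l * M j l) Finset.univ
    _ ≤ ∑ _l : n, C ^ 2 := Finset.sum_le_sum (ι := n) fun l _ => by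
        rw [sq]; exact mul_le_mul (hM i l) (hM j l) (abs_nonneg _) ((abs_nonneg _).trans (hM i l))
    _ = Fintype.card n * C ^ 2 := by simp

variable {A : Matrix n n ℝ}

theorem dotProduct_mulVec_add_smul_self (hA : A.IsSymm) (y v : n → ℝ) (t : ℝ) :
    (y + t • v) ⬝ᵥ A *ᵥ (y + t • v) =
      y ⬝ᵥ A *ᵥ y + 2 * t * (v ⬝ᵥ A *ᵥ y) + t ^ 2 * (v ⬝ᵥ A *ᵥ v) := by
  have hswap : y ⬝ᵥ A *ᵥ v = v ⬝ᵥ A *ᵥ y := by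
    rw [dotProduct_mulVec, ← mulVec_transpose, hA.eq, dotProduct_comm]
  simp only [mulVec_add, mulVec_smul, add_dotProduct, dotProduct_add, smul_dotProduct,
    dotProduct_smul, smul_eq_mul, hswap]
  ring

theorem PosSemidef.sq_dotProduct_mulVec_le (hA : A.PosSemidef) (v y : n → ℝ) :
    (v ⬝ᵥ A *ᵥ y) ^ 2 ≤ (v ⬝ᵥ A *ᵥ v) * (y ⬝ᵥ A *ᵥ y) := by
  have hdiscr := discrim_le_zero (a := v ⬝ᵥ A *ᵥ v) (b := 2 * (v ⬝ᵥ A *ᵥ y))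
    (c := y ⬝ᵥ A *ᵥ y) fun t => by
      have := hA.dotProduct_mulVec_nonneg (y + t • v)
      rw [star_trivial,
        dotProduct_mulVec_add_smul_self (isHermitian_iff_isSymm.mp hA.isHermitian)] at this
      linarith
  rw [discrim] at hdiscr
  linarith

theorem differentiable_dotProduct_mulVec_self :
    Differentiable ℝ fun y : n → ℝ => y ⬝ᵥ A *ᵥ y := by
  simp only [dotProduct, mulVec]
  fun_prop

theorem differentiable_dotProduct_mulVec (w : n → ℝ) :
    Differentiable ℝ fun y : n → ℝ => w ⬝ᵥ A *ᵥ y := by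
  simp only [dotProduct, mulVec]
  fun_prop

theorem fderiv_dotProduct_mulVec_self_apply (hA : A.IsSymm) (y v : n → ℝ) :
    fderiv ℝ (fun y : n → ℝ => y ⬝ᵥ A *ᵥ y) y v = 2 * (v ⬝ᵥ A *ᵥ y) := by
  refine (differentiable_dotProduct_mulVec_self.differentiableAt.hasFDerivAt.hasLineDerivAt
    v).unique ?_
  simp only [HasLineDerivAt, dotProduct_mulVec_add_smul_self hA]
  have := (((hasDerivAt_id (0 : ℝ)).const_mul (2 * (v ⬝ᵥ A *ᵥ y))).add
    ((hasDerivAt_pow 2 (0 : ℝ)).mul_const (v ⬝ᵥ A *ᵥ v))).const_add (y ⬝ᵥ A *ᵥ y)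
  convert this using 1
  · ext t; simp only [id_eq, Pi.add_apply]; ring
  · simp

theorem fderiv_dotProduct_mulVec_apply (w y v : n → ℝ) :
    fderiv ℝ (fun y : n → ℝ => w ⬝ᵥ A *ᵥ y) y v = w ⬝ᵥ A *ᵥ v := by
  refine ((differentiable_dotProduct_mulVec w).differentiableAt.hasFDerivAt.hasLineDerivAt
    v).unique ?_
  simp only [HasLineDerivAt, mulVec_add, mulVec_smul, dotProduct_add, dotProduct_smul, smul_eq_mul]
  simpa using ((hasDerivAt_id (0 : ℝ)).mul_const (w ⬝ᵥ A *ᵥ v)).const_add (w ⬝ᵥ A *ᵥ y)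

variable {k : ℝ}

theorem fderiv_rpow_dotProduct_mulVec_self_apply (hA : A.IsSymm) (hk : 1 ≤ k) (y v : n → ℝ) :
    fderiv ℝ (fun y : n → ℝ => (y ⬝ᵥ A *ᵥ y) ^ k) y v =
      2 * k * (y ⬝ᵥ A *ᵥ y) ^ (k - 1) * (v ⬝ᵥ A *ᵥ y) := by
  rw [(differentiable_dotProduct_mulVec_self.differentiableAt.hasFDerivAt.rpow_const
    (Or.inr hk)).fderiv]
  simp only [_root_.smul_apply, fderiv_dotProduct_mulVec_self_apply hA, smul_eq_mul]
  ring

theorem fderiv_fderiv_rpow_dotProduct_mulVec_self_apply (hA : A.IsSymm) (hk : 1 ≤ k)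
    {y : n → ℝ} (hy : y ⬝ᵥ A *ᵥ y ≠ 0) (v w : n → ℝ) :
    fderiv ℝ (fun y' => fderiv ℝ (fun y : n → ℝ => (y ⬝ᵥ A *ᵥ y) ^ k) y' w) y v =
      4 * k * (k - 1) * (y ⬝ᵥ A *ᵥ y) ^ (k - 2) * ((v ⬝ᵥ A *ᵥ y) * (w ⬝ᵥ A *ᵥ y))
        + 2 * k * (y ⬝ᵥ A *ᵥ y) ^ (k - 1) * (w ⬝ᵥ A *ᵥ v) := by
  simp_rw [fderiv_rpow_dotProduct_mulVec_self_apply hA hk]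
  have hpow := differentiable_dotProduct_mulVec_self.differentiableAt.hasFDerivAt.rpow_const
    (p := k - 1) (x := y) (Or.inl hy)
  have hlin := (differentiable_dotProduct_mulVec (A := A) w).differentiableAt.hasFDerivAt (x := y)
  have hprod : HasFDerivAt (fun y' => 2 * k * (y' ⬝ᵥ A *ᵥ y') ^ (k - 1) * (w ⬝ᵥ A *ᵥ y')) _ y :=
    (hpow.const_mul (2 * k)).mul hlin
  rw [hprod.fderiv]
  simp only [_root_.add_apply, _root_.smul_apply, smul_eq_mul,
    fderiv_dotProduct_mulVec_self_apply hA, fderiv_dotProduct_mulVec_apply,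
    show k - 1 - 1 = k - 2 by ring]
  ring

theorem PosSemidef.abs_fderiv_fderiv_rpow_dotProduct_mulVec_self_le (hA : A.PosSemidef)
    (hk : 1 ≤ k) {y : n → ℝ} (hy : 0 < y ⬝ᵥ A *ᵥ y) (v w : n → ℝ) :
    |fderiv ℝ (fun y' => fderiv ℝ (fun y : n → ℝ => (y ⬝ᵥ A *ᵥ y) ^ k) y' w) y v| ≤
      (2 * k * (k - 1) * (v ⬝ᵥ A *ᵥ v + w ⬝ᵥ A *ᵥ w) + 2 * k * |w ⬝ᵥ A *ᵥ v|) *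
        (y ⬝ᵥ A *ᵥ y) ^ (k - 1) := by
  set Q := y ⬝ᵥ A *ᵥ y
  rw [fderiv_fderiv_rpow_dotProduct_mulVec_self_apply (isHermitian_iff_isSymm.mp hA.isHermitian)
    hk hy.ne']
  have hQpow : Q ^ (k - 2) * Q = Q ^ (k - 1) := by
    rw [← rpow_add_one hy.ne']; ring_nf
  have hcs : 2 * |(v ⬝ᵥ A *ᵥ y) * (w ⬝ᵥ A *ᵥ y)| ≤ (v ⬝ᵥ A *ᵥ v + w ⬝ᵥ A *ᵥ w) * Q := by
    have := two_mul_le_add_sq |v ⬝ᵥ A *ᵥ y| |w ⬝ᵥ A *ᵥ y|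
    rw [sq_abs, sq_abs, mul_assoc, ← abs_mul] at this
    nlinarith [hA.sq_dotProduct_mulVec_le v y, hA.sq_dotProduct_mulVec_le w y]
  have hk0 : 0 ≤ k - 1 := by linarith
  have hP : 0 ≤ Q ^ (k - 2) := rpow_nonneg hy.le _
  calc _ ≤ 4 * k * (k - 1) * Q ^ (k - 2) * |(v ⬝ᵥ A *ᵥ y) * (w ⬝ᵥ A *ᵥ y)|
        + 2 * k * Q ^ (k - 1) * |w ⬝ᵥ A *ᵥ v| := by
        refine (abs_add_le _ _).trans (add_le_add ?_ ?_) <;>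
          rw [abs_mul, abs_of_nonneg (by positivity)]
    _ ≤ 2 * k * (k - 1) * Q ^ (k - 2) * ((v ⬝ᵥ A *ᵥ v + w ⬝ᵥ A *ᵥ w) * Q)
        + 2 * k * Q ^ (k - 1) * |w ⬝ᵥ A *ᵥ v| := by
        gcongr ?_ + _
        nlinarith [mul_nonneg (mul_nonneg (by linarith : (0:ℝ) ≤ k) hk0) hP]
    _ = _ := by rw [← hQpow]; ring

theorem sum_mul_fderiv_rpow_dotProduct_mulVec_self_single [DecidableEq n] (hA : A.IsSymm)
    (hk : 1 ≤ k) (x y : n → ℝ) :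
    ∑ i, x i * fderiv ℝ (fun y : n → ℝ => (y ⬝ᵥ A *ᵥ y) ^ k) y (Pi.single i 1) =
      2 * k * ((y ⬝ᵥ A *ᵥ y) ^ (k - 1) * (x ⬝ᵥ A *ᵥ y)) := by
  simp only [fderiv_rpow_dotProduct_mulVec_self_apply hA hk, single_dotProduct, one_mul,
    dotProduct.eq_1 x, Finset.mul_sum]
  exact Finset.sum_congr rfl fun i _ => by ring

theorem PosSemidef.exists_sum_mul_fderiv_fderiv_rpow_le [DecidableEq n] (hA : A.PosSemidef)
    (hk : 1 ≤ k) (s : ℝ) :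
    ∃ C, ∀ (M : Matrix n n ℝ) (y : n → ℝ), (∀ i j, |M i j| ≤ s) → 0 < y ⬝ᵥ A *ᵥ y →
      ∑ i, ∑ j, M i j * fderiv ℝ (fun y' => fderiv ℝ (fun y : n → ℝ => (y ⬝ᵥ A *ᵥ y) ^ k) y'
        (Pi.single j 1)) y (Pi.single i 1) ≤ C * (y ⬝ᵥ A *ᵥ y) ^ (k - 1) := by
  set c : n → n → ℝ := fun i j => 2 * k * (k - 1) * (Pi.single i 1 ⬝ᵥ A *ᵥ Pi.single i 1
    + Pi.single j 1 ⬝ᵥ A *ᵥ Pi.single j 1) + 2 * k * |Pi.single j 1 ⬝ᵥ A *ᵥ Pi.single i 1|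
  refine ⟨∑ i, ∑ j, s * c i j, fun M y hM hy => ?_⟩
  calc _ ≤ ∑ i, ∑ j, s * (c i j * (y ⬝ᵥ A *ᵥ y) ^ (k - 1)) :=
        sum_sum_mul_le_of_abs_le hM fun i j =>
          hA.abs_fderiv_fderiv_rpow_dotProduct_mulVec_self_le hk hy (Pi.single i 1) (Pi.single j 1)
    _ = _ := by simp only [Finset.sum_mul, mul_assoc]

end Matrix

theorem stmt0_general (p q : ℕ)
    (A : Matrix (Fin q) (Fin q) ℝ) (hApos : A.PosDef)
    (h : (Fin p → ℝ) → (Fin q → ℝ) → (Fin q → ℝ))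
    (η : (Fin p → ℝ) → (Fin q → ℝ) → Matrix (Fin q) (Fin q) ℝ)
    (Cη : ℝ) (hη : ∀ z y i j, |η z y i j| ≤ Cη)
    (δ₀ δ₁ : ℝ) (hδ₁ : 0 < δ₁)
    (hdrift : ∀ z y, h z y ⬝ᵥ A.mulVec y ≤ δ₀ - δ₁ * (y ⬝ᵥ A.mulVec y))
    (L : (Fin p → ℝ) → ((Fin q → ℝ) → ℝ) → (Fin q → ℝ) → ℝ)
    (hL : ∀ z f y, L z f y =
      (∑ i, ∑ j, (η z y * (η z y).transpose) i j *
        fderiv ℝ (fun y' => fderiv ℝ f y' (Pi.single j 1)) y (Pi.single i 1))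
      + ∑ i, h z y i * fderiv ℝ f y (Pi.single i 1)) :
    ∀ k : ℝ, 1 ≤ k → ∃ β₀ β₁ : ℝ, 0 < β₀ ∧ 0 < β₁ ∧
      ∀ z y, L z (fun y' => (y' ⬝ᵥ A.mulVec y') ^ k) y ≤
        β₀ - β₁ * (y ⬝ᵥ A.mulVec y) ^ k := by
  intro k hk
  have hA : A.IsSymm := isHermitian_iff_isSymm.mp hApos.isHermitian
  set s := Fintype.card (Fin q) * Cη ^ 2
  have hηη z y : ∀ i j, |(η z y * (η z y)ᵀ) i j| ≤ s := abs_mul_transpose_apply_le (hη z y)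
  obtain ⟨C, hC⟩ := hApos.posSemidef.exists_sum_mul_fderiv_fderiv_rpow_le hk s
  obtain ⟨B, hB⟩ := exists_mul_rpow_sub_one_le_add hk (by positivity : 0 < k * δ₁)
    (C + 2 * k * δ₀)
  -- at the origin the second derivatives may be junk values, but they are finitely many numbers
  set C₀ := ∑ i, ∑ j, s * |fderiv ℝ (fun y' => fderiv ℝ (fun y : Fin q → ℝ => (y ⬝ᵥ A *ᵥ y) ^ k)
    y' (Pi.single j 1)) 0 (Pi.single i 1)|
  refine ⟨max (max B C₀) 1, k * δ₁, lt_max_of_lt_right one_pos, by positivity, fun z y => ?_⟩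
  rw [hL, sum_mul_fderiv_rpow_dotProduct_mulVec_self_single hA hk]
  rcases eq_or_ne y 0 with rfl | hy
  · simp only [mulVec_zero, dotProduct_zero, mul_zero, add_zero, zero_rpow (by linarith : k ≠ 0),
      sub_zero]
    exact (sum_sum_mul_le_of_abs_le (hηη z 0) fun i j => le_rfl).trans
      ((le_max_right B C₀).trans (le_max_left _ _))
  · have hQ : 0 < y ⬝ᵥ A *ᵥ y := by simpa using hApos.dotProduct_mulVec_pos hy
    have hdiffusion := hC _ y (hηη z y) hQ
    have hdr := mul_le_mul_of_nonneg_left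
      (rpow_sub_one_mul_le_of_le_sub_mul hk hQ.le (hdrift z y)) (by positivity : 0 ≤ 2 * k)
    have hyoung := hB _ hQ.le
    linarith [le_max_left B C₀, le_max_left (max B C₀) 1]

/-- Lyapunov drift estimate for 𝒱_k(y) = ⟨y, A y⟩^k under the frozen generator
𝔏^z[f](y) = Tr(η ηᵀ D²f)(y) + h(z,y)·∇f(y). -/
theorem stmt0 (p q : ℕ)
    (A : Matrix (Fin q) (Fin q) ℝ) (hAsymm : A.IsSymm) (hApos : A.PosDef)
    (h : (Fin p → ℝ) → (Fin q → ℝ) → (Fin q → ℝ))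
    (η : (Fin p → ℝ) → (Fin q → ℝ) → Matrix (Fin q) (Fin q) ℝ)
    (Cη : ℝ) (hη : ∀ z y i j, |η z y i j| ≤ Cη)
    (δ₀ δ₁ : ℝ) (hδ₀ : 0 < δ₀) (hδ₁ : 0 < δ₁)
    (hdrift : ∀ z y, h z y ⬝ᵥ A.mulVec y ≤ δ₀ - δ₁ * (y ⬝ᵥ A.mulVec y))
    (L : (Fin p → ℝ) → ((Fin q → ℝ) → ℝ) → (Fin q → ℝ) → ℝ)
    (hL : ∀ z f y, L z f y =
      (∑ i, ∑ j, (η z y * (η z y).transpose) i j *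
        fderiv ℝ (fun y' => fderiv ℝ f y' (Pi.single j 1)) y (Pi.single i 1))
      + ∑ i, h z y i * fderiv ℝ f y (Pi.single i 1)) :
    ∀ k : ℝ, 1 ≤ k → ∃ β₀ β₁ : ℝ, 0 < β₀ ∧ 0 < β₁ ∧
      ∀ z y, L z (fun y' => (y' ⬝ᵥ A.mulVec y') ^ k) y ≤
        β₀ - β₁ * (y ⬝ᵥ A.mulVec y) ^ k :=
  stmt0_general p q A hApos h η Cη hη δ₀ δ₁ hδ₁ hdrift L hL
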